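/- arXiv:2102.11818 — 2 statements merged into one kernel-verified Lean document; each statement's English description precedes it below -/
import Mathlib

section
/- In the group P = ⟨a, b | b⁻¹a²b = a⁻², a⁻¹b²a = b⁻²⟩ with z = abab, the identity a⁻¹za·z = 1 holds, i.e. conjugation by a inverts z. -/
def promislowRels : Set (FreeGroup (Fin 2)) :=
  {(FreeGroup.of 1)⁻¹ * (FreeGroup.of 0) ^ 2 * FreeGroup.of 1 * (FreeGroup.of 0) ^ 2,
   (FreeGroup.of 0)⁻¹ * (FreeGroup.of 1) ^ 2 * FreeGroup.of 0 * (FreeGroup.of 1) ^ 2}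

abbrev P := PresentedGroup promislowRels

def pa : P := PresentedGroup.of 0
def pb : P := PresentedGroup.of 1

lemma rel_eq_one {r : FreeGroup (Fin 2)} (hr : r ∈ promislowRels) :
    PresentedGroup.mk promislowRels r = 1 := by
  exact (QuotientGroup.eq_one_iff r).mpr (Subgroup.subset_normalClosure hr)

lemma h1 : pb⁻¹ * pa ^ 2 * pb * pa ^ 2 = 1 := by
  have := rel_eq_one (r := (FreeGroup.of 1)⁻¹ * (FreeGroup.of 0) ^ 2 * FreeGroup.of 1 *
    (FreeGroup.of 0) ^ 2) (Set.mem_insert _ _)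
  simpa [pa, pb, PresentedGroup.of, map_mul, map_inv, map_pow] using this

lemma h2 : pa⁻¹ * pb ^ 2 * pa * pb ^ 2 = 1 := by
  have := rel_eq_one (r := (FreeGroup.of 0)⁻¹ * (FreeGroup.of 1) ^ 2 * FreeGroup.of 0 *
    (FreeGroup.of 1) ^ 2) (Set.mem_insert_of_mem _ rfl)
  simpa [pa, pb, PresentedGroup.of, map_mul, map_inv, map_pow] using this

/-- In `P`, with `z = abab`, we have `a⁻¹za·z = 1`: conjugation by `a` inverts `z`. -/
theorem conj_a_inverts_z :
    pa⁻¹ * (pa * pb * pa * pb) * pa * (pa * pb * pa * pb) = 1 := by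
  have h1' : pb⁻¹ * (pa * pa) * pb = (pa * pa)⁻¹ := by
    have := mul_eq_one_iff_eq_inv.mp h1
    rw [pow_two] at this; exact this
  have h2' : pa⁻¹ * (pb * pb) * pa = (pb * pb)⁻¹ := by
    have := mul_eq_one_iff_eq_inv.mp h2
    rw [pow_two] at this; exact this
  have hA : pa * pa * pb = pb * (pa * pa)⁻¹ := by
    calc pa * pa * pb = pb * (pb⁻¹ * (pa * pa) * pb) := by group
      _ = pb * (pa * pa)⁻¹ := by rw [h1']
  have hC : pa * (pb * pb) * pa⁻¹ = (pb * pb)⁻¹ := by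
    calc pa * (pb * pb) * pa⁻¹ = (pa * (pb * pb)⁻¹ * pa⁻¹)⁻¹ := by
          simp [mul_inv_rev, mul_assoc]
      _ = (pa * (pa⁻¹ * (pb * pb) * pa) * pa⁻¹)⁻¹ := by rw [h2']
      _ = (pb * pb)⁻¹ := by simp [mul_inv_rev, mul_assoc]
  calc pa⁻¹ * (pa * pb * pa * pb) * pa * (pa * pb * pa * pb)
      = pb * pa * pb * (pa * pa * pb) * pa * pb := by group
    _ = pb * pa * pb * (pb * (pa * pa)⁻¹) * pa * pb := by rw [hA]
    _ = pb * (pa * (pb * pb) * pa⁻¹) * pb := by group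
    _ = pb * (pb * pb)⁻¹ * pb := by rw [hC]
    _ = 1 := by group
end

section
/- Define in F₂[v^{±1}, w^{±1}, z^{±1}]: v̄ = v⁻¹+v, w̄ = w⁻¹+w, z̄ = z⁻¹+z, p₀ = v̄w̄(1+z⁻¹), q₀ = v⁻²w⁻¹+v²w+w̄z, r₀ = v̄+(v⁻¹w⁻²+vw²)z, s₀ = 1+(v̄²+w̄²)z⁻¹, and let η ↦ ηᵃ be the ring automorphism v ↦ v, w ↦ w⁻¹, z ↦ z⁻¹. Then p₀p₀ᵃ + q₀q₀ᵃ + r₀r₀ᵃ + s₀s₀ᵃ = 1. -/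
noncomputable section

/-- The Laurent polynomial ring `𝔽₂[v^{±1}, w^{±1}, z^{±1}]`, realized as the
group algebra of `ℤ³` over `𝔽₂`; the monomial `vⁱwʲzᵏ` is `M i j k`. -/
abbrev R3 := AddMonoidAlgebra (ZMod 2) (ℤ × ℤ × ℤ)

/-- The Laurent monomial `vⁱwʲzᵏ`. -/
def M (i j k : ℤ) : R3 := AddMonoidAlgebra.single (i, j, k) 1

/-- The ring automorphism `η ↦ ηᵃ`: `v ↦ v`, `w ↦ w⁻¹`, `z ↦ z⁻¹`. -/
def σ : R3 ≃ₐ[ZMod 2] R3 :=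
  AddMonoidAlgebra.domCongr (ZMod 2) (ZMod 2)
    ((AddEquiv.refl ℤ).prodCongr ((AddEquiv.neg ℤ).prodCongr (AddEquiv.neg ℤ)))

/-- `v̄ = v⁻¹ + v` -/
def vbar : R3 := M (-1) 0 0 + M 1 0 0
/-- `w̄ = w⁻¹ + w` -/
def wbar : R3 := M 0 (-1) 0 + M 0 1 0
/-- `p₀ = v̄w̄(1 + z⁻¹)` -/
def p0 : R3 := vbar * wbar * (1 + M 0 0 (-1))
/-- `q₀ = v⁻²w⁻¹ + v²w + w̄z` -/
def q0 : R3 := M (-2) (-1) 0 + M 2 1 0 + wbar * M 0 0 1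
/-- `r₀ = v̄ + (v⁻¹w⁻² + vw²)z` -/
def r0 : R3 := vbar + (M (-1) (-2) 0 + M 1 2 0) * M 0 0 1
/-- `s₀ = 1 + (v̄² + w̄²)z⁻¹` -/
def s0 : R3 := 1 + (vbar ^ 2 + wbar ^ 2) * M 0 0 (-1)


lemma M_mul (a b c d e f : ℤ) : M a b c * M d e f = M (a+d) (b+e) (c+f) := by
  simp [M, AddMonoidAlgebra.single_mul_single, Prod.mk_add_mk]

lemma σ_M (i j k : ℤ) : σ (M i j k) = M i (-j) (-k) := by
  simp [σ, M, AddMonoidAlgebra.domCongr_single, AddEquiv.prodCongr, Prod.map]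

lemma M_self (i j k : ℤ) : M i j k + M i j k = 0 := by
  rw [M, ← AddMonoidAlgebra.single_add]
  have h : (1:ZMod 2)+1 = 0 := rfl
  rw [h, AddMonoidAlgebra.single_zero]

lemma M_one : M 0 0 0 = 1 := rfl

set_option maxHeartbeats 2000000 in
/-- Equation (2) of Lemma 2: `p₀p₀ᵃ + q₀q₀ᵃ + r₀r₀ᵃ + s₀s₀ᵃ = 1` in characteristic 2. -/
theorem eqn_one : p0 * σ p0 + q0 * σ q0 + r0 * σ r0 + s0 * σ s0 = 1 := by
  simp only [p0, q0, r0, s0, vbar, wbar, ← M_one, map_add, map_mul, σ_M, sq,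
    mul_add, add_mul, M_mul]
  abel_nf
  simp only [smul_eq_mul, mul_one]
  simp only [← Int.cast_smul_eq_zsmul (ZMod 2)]
  simp only [Int.cast_ofNat, Int.cast_one, Int.cast_neg, Int.cast_two, Int.cast_three]
  simp only [show (14:ZMod 2) = 0 from rfl, show (33:ZMod 2) = 1 from rfl,
    show (4:ZMod 2) = 0 from rfl, show (8:ZMod 2) = 0 from rfl, show (2:ZMod 2) = 0 from rfl,
    show (3:ZMod 2) = 1 from rfl, zero_smul, one_smul, add_zero, zero_add]
  norm_num
  abel_nf
  simp only [← Int.cast_smul_eq_zsmul (ZMod 2)]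
  simp only [Int.cast_ofNat, Int.cast_one, Int.cast_neg, Int.cast_two, Int.cast_three]
  simp only [show (14:ZMod 2) = 0 from rfl, show (33:ZMod 2) = 1 from rfl,
    show (4:ZMod 2) = 0 from rfl, show (8:ZMod 2) = 0 from rfl, show (2:ZMod 2) = 0 from rfl,
    show (3:ZMod 2) = 1 from rfl, zero_smul, one_smul, add_zero, zero_add]
end
end
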